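/- For every positive integer n and every integer i, the ℤ[U]-module map D⁺_{−n,i} : 𝔸⁺_i → 𝔹⁺_i (here the surgery coefficient is −n, so D⁺_{−n,i}({a_s}) = {b_s} with b_s = v_s(a_s) + h_{s+n}(a_{s+n}), the index s ranging over integers congruent to i modulo n) is injective, and its cokernel is isomorphic to T as a ℤ[U]-module. -/

import Mathlib

noncomputable section

/-- The `ℤ[U]`-module `T = ℤ[U,U⁻¹]/(U·ℤ[U])`, modelled as finitely supported functions
`ℕ →₀ ℤ`, where the value at `j` is the coefficient of `U^{-j}`. -/
abbrev TT : Type := ℕ →₀ ℤ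

/-- The action of `U` on `T` : `U·U^{-j} = U^{-(j-1)}` for `j ≥ 1` and `U·U^0 = 0`. -/
def UT : AddMonoid.End TT :=
  Finsupp.liftAddHom fun j => if j = 0 then 0 else Finsupp.singleAddHom (j - 1)

/-- The map `v_s : T → T`: the identity if `s ≥ 0`, multiplication by `U^{-s}` if `s ≤ 0`. -/
def vT (s : ℤ) : AddMonoid.End TT := if 0 ≤ s then 1 else UT ^ (-s).toNat

/-- The map `h_s : T → T`: multiplication by `U^{s}` if `s ≥ 0`, the identity if `s ≤ 0`. -/
def hT (s : ℤ) : AddMonoid.End TT := if 0 ≤ s then UT ^ s.toNat else 1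

/-- The index set of integers congruent to `i` modulo `n`. -/
def Idx (n i : ℤ) : Type := {s : ℤ // n ∣ s - i}

instance (n i : ℤ) : DecidableEq (Idx n i) := Subtype.instDecidableEq

/-- `𝔸⁺_i = 𝔹⁺_i = ⊕_{s ≡ i (mod n)} T_s`. -/
abbrev ABt (n i : ℤ) : Type := Π₀ _ : Idx n i, TT

/-- Shifting the index by `n`. -/
def idxAdd (n i : ℤ) (s : Idx n i) : Idx n i :=
  ⟨s.1 + n, by obtain ⟨c, hc⟩ := s.2; exact ⟨c + 1, by rw [show s.1 + n - i = s.1 - i + n by ring, hc]; ring⟩⟩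

/-- Shifting the index by `-n`. -/
def idxSub (n i : ℤ) (s : Idx n i) : Idx n i :=
  ⟨s.1 - n, by obtain ⟨c, hc⟩ := s.2; exact ⟨c - 1, by rw [show s.1 - n - i = s.1 - i - n by ring, hc]; ring⟩⟩

/-- The map `D⁺_{n,i} : 𝔸⁺_i → 𝔹⁺_i`, `(D⁺_{n,i} a)_s = v_s(a_s) + h_{s-n}(a_{s-n})`. -/
def Dpos (n i : ℤ) : ABt n i →+ ABt n i :=
  DFinsupp.sumAddHom fun s =>
    ((DFinsupp.singleAddHom (fun _ : Idx n i => TT) s).comp (vT s.1)) +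
    ((DFinsupp.singleAddHom (fun _ : Idx n i => TT) (idxAdd n i s)).comp (hT s.1))

/-- The map `D⁺_{-n,i} : 𝔸⁺_i → 𝔹⁺_i`, `(D⁺_{-n,i} a)_s = v_s(a_s) + h_{s+n}(a_{s+n})`. -/
def Dneg (n i : ℤ) : ABt n i →+ ABt n i :=
  DFinsupp.sumAddHom fun s =>
    ((DFinsupp.singleAddHom (fun _ : Idx n i => TT) s).comp (vT s.1)) +
    ((DFinsupp.singleAddHom (fun _ : Idx n i => TT) (idxSub n i s)).comp (hT s.1))

/-- The `U`-action on `𝔸⁺_i = 𝔹⁺_i`, acting as `U` on each summand. -/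
def UAB (n i : ℤ) : AddMonoid.End (ABt n i) :=
  DFinsupp.sumAddHom fun s => (DFinsupp.singleAddHom (fun _ : Idx n i => TT) s).comp UT

/-- `ε(s,n)` for `n > 0`: writing `s = σ + kn` with `0 ≤ σ < n`,
`ε(s,n) = kσ + k(k-1)n/2` for `k ≥ 0` and `(k+1)σ + k(k+1)n/2` for `k < 0`. -/
def epsZ (s n : ℤ) : ℤ :=
  if 0 ≤ s.ediv n then
    s.ediv n * s.emod n + (s.ediv n * (s.ediv n - 1)).ediv 2 * n
  else
    (s.ediv n + 1) * s.emod n + (s.ediv n * (s.ediv n + 1)).ediv 2 * n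

/-!
Injectivity: on an element of the kernel, the top of the support must lie in negative degrees
(in degrees `s ≥ 0` the map `v_s` is the identity), and there `h_s` is the identity as well, so
the support would have to continue downwards forever.

Cokernel: the image of `x ∈ T_s` under `D` identifies `v_s x ∈ T_s` with `-h_s x ∈ T_{s-n}`;
as `v_s` and `h_s` are surjective powers of `U`, every class of the cokernel is represented in
a single summand `T_{s₀}`. The map `x ∈ T_s ↦ (-1)^⌊s/n⌋ U^{e(s)} x` with `e(s) - e(s - n) = s`
kills the image of `D`, commutes with `U`, and is `-id` on `T_{s₀}` for `s₀ = i % n - n`,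
where `e(s₀) = 0`; hence it induces the isomorphism.
-/

lemma UT_single (j : ℕ) (c : ℤ) :
    UT (Finsupp.single j c) = if j = 0 then 0 else Finsupp.single (j - 1) c := by
  refine (Finsupp.liftAddHom_apply_single _ j c).trans ?_
  split <;> simp

lemma UT_surjective : Function.Surjective UT := by
  intro x
  refine ⟨Finsupp.mapDomain Nat.succ x, ?_⟩
  induction x using Finsupp.induction_linear with
  | zero => simp
  | add x y hx hy => rw [Finsupp.mapDomain_add, map_add, hx, hy]
  | single j c => simp [Finsupp.mapDomain_single, UT_single]

lemma UT_pow_surjective (m : ℕ) : Function.Surjective (UT ^ m) := by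
  rw [AddMonoid.End.coe_pow]
  exact UT_surjective.iterate m

lemma vT_eq_pow (s : ℤ) : vT s = UT ^ (-s).toNat := by
  unfold vT
  split_ifs
  · rw [Int.toNat_of_nonpos (by omega), pow_zero]
  · rfl

lemma hT_eq_pow (s : ℤ) : hT s = UT ^ s.toNat := by
  unfold hT
  split_ifs
  · rfl
  · rw [Int.toNat_of_nonpos (by omega), pow_zero]

lemma vT_surjective (s : ℤ) : Function.Surjective (vT s) := by
  rw [vT_eq_pow]
  exact UT_pow_surjective _

lemma hT_surjective (s : ℤ) : Function.Surjective (hT s) := by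
  rw [hT_eq_pow]
  exact UT_pow_surjective _

section IdxShift

variable {n i : ℤ}

@[simp] lemma idxAdd_val (t : Idx n i) : (idxAdd n i t).1 = t.1 + n := rfl

@[simp] lemma idxSub_val (t : Idx n i) : (idxSub n i t).1 = t.1 - n := rfl

@[simp] lemma idxSub_idxAdd (t : Idx n i) : idxSub n i (idxAdd n i t) = t :=
  Subtype.ext (add_sub_cancel_right _ _)

@[simp] lemma idxAdd_idxSub (t : Idx n i) : idxAdd n i (idxSub n i t) = t :=
  Subtype.ext (sub_add_cancel _ _)

lemma idxSub_eq_iff {s t : Idx n i} : idxSub n i s = t ↔ s = idxAdd n i t := by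
  constructor <;> rintro rfl <;> simp

lemma eq_of_apply_idxSub_eq {α : Type*} (f : Idx n i → α)
    (hf : ∀ t, f (idxSub n i t) = f t) (t t' : Idx n i) : f t = f t' := by
  obtain ⟨c, hc⟩ : n ∣ t.1 - t'.1 := by simpa using dvd_sub t.2 t'.2
  induction c using Int.induction_on generalizing t with
  | zero => exact congrArg f (Subtype.ext (by linarith))
  | succ c ih => rw [← hf t, ih _ (by rw [idxSub_val]; linarith)]
  | pred c ih => rw [← idxSub_idxAdd t, hf, ih _ (by rw [idxAdd_val]; linarith)]

end IdxShift

section Dneg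

variable {n i : ℤ}

lemma Dneg_single (s : Idx n i) (x : TT) :
    Dneg n i (DFinsupp.single s x) =
      DFinsupp.single s (vT s.1 x) + DFinsupp.single (idxSub n i s) (hT s.1 x) := by
  rw [Dneg, DFinsupp.sumAddHom_single]
  rfl

lemma Dneg_apply (a : ABt n i) (t : Idx n i) :
    Dneg n i a t = vT t.1 (a t) + hT (t.1 + n) (a (idxAdd n i t)) := by
  induction a using DFinsupp.induction with
  | h0 => simp
  | ha s x a _ _ ih =>
    rw [map_add, DFinsupp.add_apply, ih, Dneg_single]
    simp only [DFinsupp.add_apply, DFinsupp.single_apply, idxSub_eq_iff, map_add]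
    -- the two terms can only meet at the same index when `n = 0`
    split_ifs with hst hs hs <;> subst_vars <;>
      simp only [idxAdd_val, eq_rec_constant, add_zero, zero_add, map_zero] <;>
      first | abel1 | (rw [← idxAdd_val, ← hs]; abel1)

lemma Dneg_injective (hn : 0 < n) : Function.Injective (Dneg n i) := by
  rw [injective_iff_map_eq_zero]
  intro a ha
  have hcoord (t : Idx n i) : vT t.1 (a t) + hT (t.1 + n) (a (idxAdd n i t)) = 0 := by
    rw [← Dneg_apply, ha, DFinsupp.zero_apply]
  by_contra ha0
  have hne : a.support.Nonempty := by simpa [Finset.nonempty_iff_ne_empty] using ha0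
  obtain ⟨tmax, htmax, hmax⟩ := a.support.exists_max_image Subtype.val hne
  obtain ⟨tmin, htmin, hmin⟩ := a.support.exists_min_image Subtype.val hne
  rw [DFinsupp.mem_support_iff] at htmax htmin
  have htop : tmax.1 < 0 := by
    by_contra! h
    have hout : a (idxAdd n i tmax) = 0 := by
      by_contra h'
      have := hmax _ (DFinsupp.mem_support_iff.2 h')
      simp only [idxAdd_val] at this
      omega
    have := hcoord tmax
    rw [hout, map_zero, add_zero, vT, if_pos h] at this
    exact htmax this
  have hbelow : a (idxSub n i tmin) ≠ 0 := by
    intro h0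
    have := hcoord (idxSub n i tmin)
    rw [h0, map_zero, zero_add, idxAdd_idxSub, idxSub_val, hT,
      if_neg (by linarith [hmin _ (DFinsupp.mem_support_iff.2 htmax)])] at this
    exact htmin this
  have := hmin _ (DFinsupp.mem_support_iff.2 hbelow)
  simp only [idxSub_val] at this
  omega

end Dneg

/-- The exponent `e` of `U` in the map `coker D⁺_{-n,i} → T`: it solves `e(s) = e(s - n) + s`,
and is normalised so that it vanishes at `s % n - n`. -/
def cokerExp (n s : ℤ) : ℤ := (s * (s + n) - s % n * (s % n - n)) / (2 * n)

lemma cokerExp_sub_self {n : ℤ} (hn : n ≠ 0) (s : ℤ) :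
    cokerExp n (s - n) + s = cokerExp n s := by
  rw [cokerExp, cokerExp, Int.sub_emod_right, ← Int.add_mul_ediv_right _ _ (by omega)]
  congr 1
  ring

lemma cokerExp_nonneg {n : ℤ} (hn : 0 < n) (s : ℤ) : 0 ≤ cokerExp n s := by
  apply Int.ediv_nonneg _ (by omega)
  obtain ⟨k, hk⟩ : ∃ k, s % n + n * k = s := ⟨_, Int.emod_add_mul_ediv s n⟩
  have h0 := Int.emod_nonneg s hn.ne'
  have h1 := Int.emod_lt_of_pos s hn
  have hfactor : s * (s + n) - s % n * (s % n - n) = n * (k + 1) * (2 * (s % n) + n * k) := by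
    linear_combination (-(s + s % n + n * k + n)) * hk
  rw [hfactor]
  rcases le_or_gt 0 k with hk0 | hk0
  · positivity
  · obtain rfl | hk2 : k = -1 ∨ k ≤ -2 := by omega
    · simp
    · exact mul_nonneg_of_nonpos_of_nonpos (by nlinarith) (by nlinarith)

lemma cokerExp_emod_sub_self (n s : ℤ) : cokerExp n (s % n - n) = 0 := by
  rw [cokerExp, Int.sub_emod_right, Int.emod_emod]
  ring_nf
  simp

def cokerMap (n i : ℤ) : ABt n i →+ TT :=
  DFinsupp.sumAddHom fun s => (s.1 / n).negOnePow • (UT ^ (cokerExp n s.1).toNat : TT →+ TT)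

def baseIdx (n i : ℤ) : Idx n i :=
  ⟨i % n - n, ⟨-(i / n) - 1, by rw [Int.emod_def]; ring⟩⟩

section Coker

variable {n i : ℤ}

lemma baseIdx_val : (baseIdx n i).1 = i % n - n := rfl

lemma cokerMap_single (s : Idx n i) (x : TT) :
    cokerMap n i (DFinsupp.single s x) = (s.1 / n).negOnePow • (UT ^ (cokerExp n s.1).toNat) x :=
  DFinsupp.sumAddHom_single _ _ _

lemma UAB_single (s : Idx n i) (x : TT) :
    UAB n i (DFinsupp.single s x) = DFinsupp.single s (UT x) :=
  DFinsupp.sumAddHom_single _ _ _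

lemma cokerMap_comp_Dneg (hn : 0 < n) : (cokerMap n i).comp (Dneg n i) = 0 := by
  refine DFinsupp.addHom_ext fun s y => ?_
  have hexp := cokerExp_sub_self hn.ne' s.1
  have hexp₀ := cokerExp_nonneg hn (s.1 - n)
  have hexp₁ := cokerExp_nonneg hn s.1
  have hpow : (UT ^ (cokerExp n (s.1 - n)).toNat) (hT s.1 y) =
      (UT ^ (cokerExp n s.1).toNat) (vT s.1 y) := by
    simp only [hT_eq_pow, vT_eq_pow, AddMonoid.End.coe_pow, ← Function.iterate_add_apply]
    congr 1
    omega
  have hsign : ((s.1 - n) / n).negOnePow = -(s.1 / n).negOnePow := by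
    rw [show s.1 - n = s.1 + (-1) * n by ring, Int.add_mul_ediv_right _ _ hn.ne',
      Int.negOnePow_add, Int.negOnePow_neg, Int.negOnePow_one, mul_neg_one]
  rw [AddMonoidHom.comp_apply, Dneg_single, map_add, cokerMap_single, cokerMap_single,
    idxSub_val, hsign, hpow, Units.neg_smul, add_neg_cancel, AddMonoidHom.zero_apply]

lemma cokerMap_UAB (a : ABt n i) : cokerMap n i (UAB n i a) = UT (cokerMap n i a) := by
  induction a using DFinsupp.induction with
  | h0 => simp
  | ha s x a _ _ ih =>
    simp only [map_add, ih, UAB_single, cokerMap_single]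
    rw [Units.smul_def, Units.smul_def, map_zsmul UT, AddMonoid.End.coe_pow,
      ← Function.iterate_succ_apply, Function.iterate_succ_apply']

lemma cokerMap_single_baseIdx (hn : 0 < n) (x : TT) :
    cokerMap n i (DFinsupp.single (baseIdx n i) x) = -x := by
  have hdiv : (baseIdx n i).1 / n = -1 := by
    rw [baseIdx_val, show i % n - n = i % n + (-1) * n by ring, Int.add_mul_ediv_right _ _ hn.ne',
      Int.ediv_eq_zero_of_lt (Int.emod_nonneg i hn.ne') (Int.emod_lt_of_pos i hn), zero_add]
  rw [cokerMap_single, hdiv, baseIdx_val, cokerExp_emod_sub_self]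
  simp

end Coker

section Quotient

variable {n i : ℤ} {Q : Type*} [AddGroup Q]

lemma range_comp_single_idxSub {f : ABt n i →+ Q} (hf : f.comp (Dneg n i) = 0) (t : Idx n i) :
    (f.comp (DFinsupp.singleAddHom _ (idxSub n i t))).range =
      (f.comp (DFinsupp.singleAddHom _ t)).range := by
  have hrel (y : TT) :
      f (DFinsupp.single (idxSub n i t) (-hT t.1 y)) = f (DFinsupp.single t (vT t.1 y)) := by
    have := DFunLike.congr_fun hf (DFinsupp.single t y)
    rw [AddMonoidHom.comp_apply, Dneg_single, map_add, AddMonoidHom.zero_apply,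
      add_eq_zero_iff_eq_neg] at this
    rw [this, DFinsupp.single_neg, map_neg]
  ext q
  simp only [AddMonoidHom.mem_range, AddMonoidHom.comp_apply, DFinsupp.singleAddHom_apply]
  constructor
  · rintro ⟨x, rfl⟩
    obtain ⟨y, hy⟩ := hT_surjective t.1 (-x)
    exact ⟨vT t.1 y, by rw [← hrel, hy, neg_neg]⟩
  · rintro ⟨x, rfl⟩
    obtain ⟨y, rfl⟩ := vT_surjective t.1 x
    exact ⟨-hT t.1 y, hrel y⟩

lemma surjective_comp_single {f : ABt n i →+ Q} (hsurj : Function.Surjective f)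
    (hf : f.comp (Dneg n i) = 0) (t : Idx n i) :
    Function.Surjective (f.comp (DFinsupp.singleAddHom _ t)) := by
  intro q
  obtain ⟨b, rfl⟩ := hsurj q
  rw [← AddMonoidHom.mem_range]
  induction b using DFinsupp.induction with
  | h0 => simp only [map_zero, zero_mem]
  | ha s x b _ _ ih =>
    rw [map_add]
    refine add_mem ?_ ih
    rw [← eq_of_apply_idxSub_eq (fun t => (f.comp (DFinsupp.singleAddHom _ t)).range)
      (range_comp_single_idxSub hf) s t]
    exact ⟨x, rfl⟩

end Quotient

/-- For every positive `n` and every `i`, the map `D⁺_{-n,i} : 𝔸⁺_i → 𝔹⁺_i` is injective and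
its cokernel is isomorphic to `T` as a `ℤ[U]`-module. -/
theorem stmt5 (n i : ℤ) (hn : 0 < n) :
    Function.Injective (Dneg n i) ∧
    ∃ e : (ABt n i ⧸ AddMonoidHom.range (Dneg n i)) ≃+ TT,
      ∀ x : ABt n i,
        e (QuotientAddGroup.mk (UAB n i x)) = UT (e (QuotientAddGroup.mk x)) := by
  let π := QuotientAddGroup.mk' (Dneg n i).range
  have hπ : π.comp (Dneg n i) = 0 :=
    (AddMonoidHom.range_le_ker_iff _ _).1 (QuotientAddGroup.ker_mk' _).ge
  let Φ := QuotientAddGroup.lift _ (cokerMap n i)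
    ((AddMonoidHom.range_le_ker_iff _ _).2 (cokerMap_comp_Dneg hn))
  let Ψ : TT → ABt n i ⧸ (Dneg n i).range := fun x => π (DFinsupp.single (baseIdx n i) (-x))
  have hΦΨ : Function.LeftInverse Φ Ψ := fun x => by
    simp [Φ, Ψ, π, cokerMap_single_baseIdx hn]
  have hΨ : Function.Surjective Ψ :=
    (surjective_comp_single (QuotientAddGroup.mk'_surjective _) hπ _).comp neg_surjective
  refine ⟨Dneg_injective hn,
    AddEquiv.ofBijective Φ ⟨(hΦΨ.rightInverse_of_surjective hΨ).injective, hΦΨ.surjective⟩,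
    fun x => cokerMap_UAB x⟩
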